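/- arXiv:math/0405578 — 8 statements merged into one kernel-verified Lean document; each statement's English description precedes it below -/
import Mathlib

section
/- Let s : ℕ → K with s(0) ≠ 0, and define the operator T := Σ_{k≥0} (s(k)/k_ψ!)·∂_ψ^k on K[X]. Then T is a K-linear automorphism of K[X], i.e. T is bijective. -/
/-!
Since `∂_ψ` lowers degrees, `T p = s 0 • p + (terms of degree < deg p)`. A linear endomorphism
of `K[X]` that agrees with a nonzero scalar up to terms of lower degree is injective (it preserves
degrees) and surjective (subtract `T (c⁻¹ • q)` from `q` and induct on the degree).
-/

open Polynomial Finset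

theorem mem_degreeLT_natDegree_add_one {R : Type*} [Semiring R] (p : R[X]) :
    p ∈ degreeLT R (p.natDegree + 1) :=
  mem_degreeLT.2 <| degree_le_natDegree.trans_lt <| by exact_mod_cast p.natDegree.lt_succ_self

theorem eq_zero_of_mem_degreeLT_natDegree {R : Type*} [Semiring R] {p : R[X]}
    (hp : p ∈ degreeLT R p.natDegree) : p = 0 := by
  by_contra hp0
  exact (mem_degreeLT.1 hp).ne (degree_eq_natDegree hp0)

theorem map_mem_degreeLT_of_mem_degreeLT_succ {R : Type*} [Semiring R] {a : ℕ → R}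
    {D : R[X] →ₗ[R] R[X]} (hD : ∀ n : ℕ, D (X ^ (n + 1)) = a (n + 1) • X ^ n) (hD1 : D 1 = 0)
    {n : ℕ} {p : R[X]} (hp : p ∈ degreeLT R (n + 1)) : D p ∈ degreeLT R n := by
  classical
  rw [degreeLT_eq_span_X_pow] at hp
  refine Submodule.span_induction ?_ (by simp) (fun _ _ _ _ => by simpa using Submodule.add_mem _)
    (fun c _ _ h => by simpa using Submodule.smul_mem _ c h) hp
  simp only [coe_image, coe_range, Set.mem_image, Set.mem_Iio, forall_exists_index, and_imp]
  rintro _ (_ | i) hi rfl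
  · simp [hD1]
  · rw [hD]
    refine Submodule.smul_mem _ _ (mem_degreeLT.2 ((degree_X_pow_le i).trans_lt ?_))
    exact_mod_cast Nat.succ_lt_succ_iff.1 hi

theorem map_mem_degreeLT {R : Type*} [Semiring R] {a : ℕ → R}
    {D : R[X] →ₗ[R] R[X]} (hD : ∀ n : ℕ, D (X ^ (n + 1)) = a (n + 1) • X ^ n) (hD1 : D 1 = 0)
    {n : ℕ} {p : R[X]} (hp : p ∈ degreeLT R n) : D p ∈ degreeLT R n :=
  map_mem_degreeLT_of_mem_degreeLT_succ hD hD1 (degreeLT_mono n.le_succ hp)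

theorem bijective_of_sub_smul_mem_degreeLT {K : Type*} [Field K] (T : K[X] →ₗ[K] K[X]) {c : K}
    (hc : c ≠ 0) (hT : ∀ p, T p - c • p ∈ degreeLT K p.natDegree) : Function.Bijective T := by
  refine ⟨(injective_iff_map_eq_zero T).2 fun p hp => ?_, fun q => ?_⟩
  · have := Submodule.smul_mem _ (-c⁻¹) (hT p)
    rw [hp, zero_sub, smul_neg, neg_smul, neg_neg, smul_smul, inv_mul_cancel₀ hc, one_smul] at this
    exact eq_zero_of_mem_degreeLT_natDegree this
  induction hn : q.natDegree using Nat.strong_induction_on generalizing q with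
  | _ n ih =>
  have hr : q - T (c⁻¹ • q) ∈ degreeLT K n := by
    have := Submodule.neg_mem _ (hT (c⁻¹ • q))
    rwa [natDegree_smul q (inv_ne_zero hc), hn, smul_smul, mul_inv_cancel₀ hc, one_smul,
      neg_sub] at this
  by_cases hr0 : q - T (c⁻¹ • q) = 0
  · exact ⟨c⁻¹ • q, (sub_eq_zero.1 hr0).symm⟩
  obtain ⟨p, hp⟩ := ih _ ((natDegree_lt_iff_degree_lt hr0).2 (mem_degreeLT.1 hr)) _ rfl
  exact ⟨c⁻¹ • q + p, by rw [map_add, hp, add_sub_cancel]⟩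

theorem stmt1_general {K : Type*} [Field K]
    (nψ : ℕ → K)
    (nψfact : ℕ → K) (hfact0 : nψfact 0 = 1)
    (D : Polynomial K →ₗ[K] Polynomial K)
    (hD : ∀ n : ℕ, D (X ^ (n + 1)) = nψ (n + 1) • X ^ n)
    (hD1 : D 1 = 0)
    (s : ℕ → K) (hs0 : s 0 ≠ 0)
    (T : Polynomial K →ₗ[K] Polynomial K)
    (hT : ∀ p : Polynomial K,
      T p = ∑ k ∈ Finset.range (p.natDegree + 1),
        (s k / nψfact k) • ((D ^ k) p)) :
    Function.Bijective T := by
  refine bijective_of_sub_smul_mem_degreeLT T hs0 fun p => ?_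
  rw [hT, sum_range_succ', pow_zero, hfact0, div_one, Module.End.one_apply, add_sub_cancel_right]
  refine Submodule.sum_mem _ fun k _ => Submodule.smul_mem _ _ ?_
  rw [pow_succ, Module.End.mul_apply]
  exact Module.End.pow_apply_mem_of_forall_mem k (fun _ => map_mem_degreeLT hD hD1)
    _ (map_mem_degreeLT_of_mem_degreeLT_succ hD hD1 (mem_degreeLT_natDegree_add_one p))

/-- Let `s : ℕ → K` with `s 0 ≠ 0` and define
`T := Σ_{k≥0} (s k / k_ψ!) ∂_ψ^k` on `K[X]`.  Then `T` is a `K`-linear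
automorphism of `K[X]`, i.e. `T` is bijective. -/
theorem stmt1 {K : Type*} [Field K] [CharZero K]
    (ψ : ℕ → K) (hψ : ∀ n, ψ n ≠ 0)
    (nψ : ℕ → K) (hnψ0 : nψ 0 = 0)
    (hnψ : ∀ n : ℕ, 1 ≤ n → nψ n = ψ (n - 1) / ψ n)
    (hadm : ∀ n : ℕ, 1 ≤ n → nψ n ≠ 0)
    (nψfact : ℕ → K) (hfact0 : nψfact 0 = 1)
    (hfact : ∀ n : ℕ, nψfact (n + 1) = nψ (n + 1) * nψfact n)
    (D : Polynomial K →ₗ[K] Polynomial K)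
    (hD : ∀ n : ℕ, D (X ^ (n + 1)) = nψ (n + 1) • X ^ n)
    (hD1 : D 1 = 0)
    (s : ℕ → K) (hs0 : s 0 ≠ 0)
    (T : Polynomial K →ₗ[K] Polynomial K)
    (hT : ∀ p : Polynomial K,
      T p = ∑ k ∈ Finset.range (p.natDegree + 1),
        (s k / nψfact k) • ((D ^ k) p)) :
    Function.Bijective T :=
  stmt1_general nψ nψfact hfact0 D hD hD1 s hs0 T hT
end

section
/- With Q, S and A_n as in the context, the ψ-Appell polynomials satisfy the ψ-difference equation Q(A_n) = n_ψ·X^{n−1} for all n ≥ 1, and Q(A_0) = 0. -/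
open Polynomial

theorem Module.End.sum_smul_pow_succ_apply {R M : Type*} [CommSemiring R] [AddCommMonoid M]
    [Module R M] (D : Module.End R M) (c : ℕ → R) (s : Finset ℕ) (x : M) :
    ∑ k ∈ s, c k • (D ^ (k + 1)) x = D (∑ k ∈ s, c k • (D ^ k) x) := by
  simp only [map_sum, map_smul, pow_succ', Module.End.mul_apply]

theorem stmt4_general {K : Type*} [Field K]
    (nψ : ℕ → K)
    (nψfact : ℕ → K)
    (D : Polynomial K →ₗ[K] Polynomial K)
    (hD : ∀ n : ℕ, D (X ^ (n + 1)) = nψ (n + 1) • X ^ n)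
    (hD1 : D 1 = 0)
    (q : ℕ → K)
    (Q : Polynomial K →ₗ[K] Polynomial K)
    (hQ : ∀ p : Polynomial K,
      Q p = ∑ k ∈ Finset.range (p.natDegree + 1),
        (q (k + 1) / nψfact (k + 1)) • ((D ^ (k + 1)) p))
    (S : Polynomial K →ₗ[K] Polynomial K)
    (hS : ∀ p : Polynomial K,
      S p = ∑ k ∈ Finset.range (p.natDegree + 1),
        (q (k + 1) / nψfact (k + 1)) • ((D ^ k) p))
    (Sinv : Polynomial K →ₗ[K] Polynomial K)
    (hSinv₂ : ∀ p : Polynomial K, S (Sinv p) = p)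
    (A : ℕ → Polynomial K)
    (hA : ∀ n : ℕ, A n = Sinv (X ^ n)) :
    (∀ n : ℕ, 1 ≤ n → Q (A n) = nψ n • X ^ (n - 1)) ∧
    Q (A 0) = 0 := by
  -- `Q = D ∘ S`, and `S (A n) = X ^ n`.
  have hQA : ∀ n, Q (A n) = D (X ^ n) := fun n => by
    rw [hQ, Module.End.sum_smul_pow_succ_apply, ← hS, hA, hSinv₂]
  refine ⟨fun n hn => ?_, by rw [hQA, pow_zero, hD1]⟩
  obtain ⟨m, rfl⟩ := Nat.exists_eq_add_of_le' hn
  rw [hQA, hD, Nat.add_sub_cancel]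

/-- With `Q`, `S` and `A n` as in the context, the ψ-Appell
polynomials satisfy the ψ-difference equation `Q (A n) = n_ψ • X^(n-1)` for all
`n ≥ 1`, and `Q (A 0) = 0`. -/
theorem stmt4 {K : Type*} [Field K] [CharZero K]
    (ψ : ℕ → K) (hψ : ∀ n, ψ n ≠ 0)
    (nψ : ℕ → K) (hnψ0 : nψ 0 = 0)
    (hnψ : ∀ n : ℕ, 1 ≤ n → nψ n = ψ (n - 1) / ψ n)
    (hadm : ∀ n : ℕ, 1 ≤ n → nψ n ≠ 0)
    (nψfact : ℕ → K) (hfact0 : nψfact 0 = 1)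
    (hfact : ∀ n : ℕ, nψfact (n + 1) = nψ (n + 1) * nψfact n)
    (D : Polynomial K →ₗ[K] Polynomial K)
    (hD : ∀ n : ℕ, D (X ^ (n + 1)) = nψ (n + 1) • X ^ n)
    (hD1 : D 1 = 0)
    (q : ℕ → K) (hq1 : q 1 ≠ 0)
    (Q : Polynomial K →ₗ[K] Polynomial K)
    (hQ : ∀ p : Polynomial K,
      Q p = ∑ k ∈ Finset.range (p.natDegree + 1),
        (q (k + 1) / nψfact (k + 1)) • ((D ^ (k + 1)) p))
    (S : Polynomial K →ₗ[K] Polynomial K)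
    (hS : ∀ p : Polynomial K,
      S p = ∑ k ∈ Finset.range (p.natDegree + 1),
        (q (k + 1) / nψfact (k + 1)) • ((D ^ k) p))
    (Sinv : Polynomial K →ₗ[K] Polynomial K)
    (hSinv₁ : ∀ p : Polynomial K, Sinv (S p) = p)
    (hSinv₂ : ∀ p : Polynomial K, S (Sinv p) = p)
    (A : ℕ → Polynomial K)
    (hA : ∀ n : ℕ, A n = Sinv (X ^ n)) :
    (∀ n : ℕ, 1 ≤ n → Q (A n) = nψ n • X ^ (n - 1)) ∧
    Q (A 0) = 0 :=
  stmt4_general nψ nψfact D hD hD1 q Q hQ S hS Sinv hSinv₂ A hA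
end

section
/- With Q, S and A_n as in the context, for every y ∈ K define the generalized translation operator E^y := Σ_{k≥0} (y^k/k_ψ!)·∂_ψ^k on K[X]. Then the ψ-Sheffer–Appell identity holds: for every n ≥ 0, E^y(A_n) = Σ_{s=0}^{n} binom_ψ(n,s)·A_s(y)·X^{n−s}, where A_s(y) ∈ K denotes the evaluation of the polynomial A_s at y. -/
open Polynomial Finset

private lemma tri_aux {M : Type*} [AddCommMonoid M] (n : ℕ) (f : ℕ → ℕ → M) :
    ∑ s ∈ range (n + 1), ∑ t ∈ range (n - s + 1), f s t
      = ∑ j ∈ range (n + 1), ∑ s ∈ range (j + 1), f s (j - s) := by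
  have h1 : ∀ s ∈ range (n + 1), ∑ t ∈ range (n - s + 1), f s t
      = ∑ j ∈ Ico s (n + 1), f s (j - s) := by
    intro s hs
    simp only [mem_range] at hs
    rw [Finset.sum_Ico_eq_sum_range]
    apply Finset.sum_congr
    · congr 1; omega
    · intro t _; congr 1; omega
  rw [Finset.sum_congr rfl h1]
  have h2 := Finset.sum_Ico_Ico_comm 0 (n + 1) (fun s j => f s (j - s))
  simp only [Nat.Ico_zero_eq_range] at h2
  exact h2

/-- With `Q`, `S` and `A n` as in the context, for every
`y ∈ K` define the generalized translation operator
`E^y := Σ_{k≥0} (y^k / k_ψ!) ∂_ψ^k` on `K[X]`.  Then the ψ-Sheffer–Appell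
identity holds: for every `n ≥ 0`,
`E^y (A n) = Σ_{s=0}^{n} binom_ψ(n,s) • (A s).eval y • X^(n-s)`. -/
theorem stmt5 {K : Type*} [Field K] [CharZero K]
    (ψ : ℕ → K) (hψ : ∀ n, ψ n ≠ 0)
    (nψ : ℕ → K) (hnψ0 : nψ 0 = 0)
    (hnψ : ∀ n : ℕ, 1 ≤ n → nψ n = ψ (n - 1) / ψ n)
    (hadm : ∀ n : ℕ, 1 ≤ n → nψ n ≠ 0)
    (nψfact : ℕ → K) (hfact0 : nψfact 0 = 1)
    (hfact : ∀ n : ℕ, nψfact (n + 1) = nψ (n + 1) * nψfact n)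
    (D : Polynomial K →ₗ[K] Polynomial K)
    (hD : ∀ n : ℕ, D (X ^ (n + 1)) = nψ (n + 1) • X ^ n)
    (hD1 : D 1 = 0)
    (q : ℕ → K) (hq1 : q 1 ≠ 0)
    (Q : Polynomial K →ₗ[K] Polynomial K)
    (hQ : ∀ p : Polynomial K,
      Q p = ∑ k ∈ Finset.range (p.natDegree + 1),
        (q (k + 1) / nψfact (k + 1)) • ((D ^ (k + 1)) p))
    (S : Polynomial K →ₗ[K] Polynomial K)
    (hS : ∀ p : Polynomial K,
      S p = ∑ k ∈ Finset.range (p.natDegree + 1),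
        (q (k + 1) / nψfact (k + 1)) • ((D ^ k) p))
    (Sinv : Polynomial K →ₗ[K] Polynomial K)
    (hSinv₁ : ∀ p : Polynomial K, Sinv (S p) = p)
    (hSinv₂ : ∀ p : Polynomial K, S (Sinv p) = p)
    (A : ℕ → Polynomial K)
    (hA : ∀ n : ℕ, A n = Sinv (X ^ n))
    (E : K → (Polynomial K →ₗ[K] Polynomial K))
    (hE : ∀ (y : K) (p : Polynomial K),
      E y p = ∑ k ∈ Finset.range (p.natDegree + 1),
        (y ^ k / nψfact k) • ((D ^ k) p)) :
    ∀ (y : K) (n : ℕ),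
      E y (A n) = ∑ s ∈ Finset.range (n + 1),
        ((nψfact n / (nψfact s * nψfact (n - s))) * (A s).eval y) • X ^ (n - s) := by
  classical
  set c : ℕ → K := fun t => q (t + 1) / nψfact (t + 1) with hc
  -- factorials are nonzero
  have hfactne : ∀ m, nψfact m ≠ 0 := by
    intro m
    induction m with
    | zero => rw [hfact0]; exact one_ne_zero
    | succ m ih => rw [hfact]; exact mul_ne_zero (hadm (m + 1) (by omega)) ih
  -- D kills constants
  have hDC : ∀ a : K, D (C a) = 0 := by
    intro a
    have h : (C a : Polynomial K) = a • 1 := by rw [smul_eq_C_mul, mul_one]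
    rw [h, map_smul, hD1, smul_zero]
  have hDXpow : ∀ m : ℕ, D (X ^ m : Polynomial K) = nψ m • X ^ (m - 1) := by
    intro m
    cases m with
    | zero => simp only [pow_zero, hD1, hnψ0, zero_smul]
    | succ m => exact hD m
  -- D lowers degree
  have hdeg : ∀ (p : Polynomial K) (m : ℕ), p.natDegree ≤ m + 1 → (D p).natDegree ≤ m := by
    intro p m hp
    conv_lhs => rw [p.as_sum_range' (m + 2) (by omega)]
    rw [map_sum]
    apply Polynomial.natDegree_sum_le_of_forall_le
    intro i hi
    simp only [mem_range] at hi
    have hmono : (monomial i (p.coeff i) : Polynomial K) = p.coeff i • X ^ i := by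
      rw [smul_eq_C_mul, C_mul_X_pow_eq_monomial]
    rw [hmono, map_smul, hDXpow]
    refine le_trans (Polynomial.natDegree_smul_le _ _) ?_
    refine le_trans (Polynomial.natDegree_smul_le _ _) ?_
    refine le_trans (Polynomial.natDegree_X_pow_le _) (by omega)
  -- iterated D vanishes above the degree
  have hpow0 : ∀ (k : ℕ) (p : Polynomial K), p.natDegree < k → (D ^ k) p = 0 := by
    intro k
    induction k with
    | zero => intro p hp; omega
    | succ k ih =>
      intro p hp
      rw [pow_succ, Module.End.mul_apply]
      rcases Nat.eq_zero_or_pos k with hk | hk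
      · subst hk
        have hp0 : p.natDegree = 0 := by omega
        have : D p = 0 := by
          conv_lhs => rw [Polynomial.eq_C_of_natDegree_le_zero (le_of_eq hp0)]
          exact hDC _
        rw [this, map_zero]
      · exact ih (D p) (lt_of_le_of_lt (hdeg p (k - 1) (by omega)) (by omega))
  have vdeg : ∀ (p : Polynomial K) (k : ℕ), p.natDegree + 1 ≤ k → (D ^ k) p = 0 :=
    fun p k h => hpow0 k p (by omega)
  -- extension of truncated sums
  have hext : ∀ (f : ℕ → K) (p : Polynomial K) (M N : ℕ), M ≤ N →
      (∀ k, M ≤ k → (D ^ k) p = 0) →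
      ∑ k ∈ range M, f k • (D ^ k) p = ∑ k ∈ range N, f k • (D ^ k) p := by
    intro f p M N hMN hvan
    refine Finset.sum_subset (Finset.range_subset_range.mpr hMN) ?_
    intro k hk hk'
    simp only [mem_range] at hk'
    rw [hvan k (by omega), smul_zero]
  have hext2 : ∀ (f : ℕ → K) (p : Polynomial K) (M N : ℕ),
      (∀ k, M ≤ k → (D ^ k) p = 0) → (∀ k, N ≤ k → (D ^ k) p = 0) →
      ∑ k ∈ range M, f k • (D ^ k) p = ∑ k ∈ range N, f k • (D ^ k) p := by
    intro f p M N h1 h2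
    rcases le_total M N with h | h
    · exact hext f p M N h h1
    · exact (hext f p N M h h2).symm
  -- commutation facts
  have hcommD : ∀ (k : ℕ) (p : Polynomial K), D ((D ^ k) p) = (D ^ k) (D p) := by
    intro k p
    rw [← Module.End.mul_apply, ← pow_succ', pow_succ, Module.End.mul_apply]
  have hDS : ∀ p : Polynomial K, D (S p) = S (D p) := by
    intro p
    rw [hS p, hS (D p), map_sum]
    have h1 : ∀ k ∈ range (p.natDegree + 1),
        D (c k • (D ^ k) p) = c k • (D ^ k) (D p) := by
      intro k _
      rw [map_smul, hcommD]
    rw [Finset.sum_congr rfl h1]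
    refine hext2 c (D p) (p.natDegree + 1) ((D p).natDegree + 1) ?_ (vdeg (D p))
    intro k hk
    rw [← hcommD]
    rw [vdeg p k (by omega), map_zero]
  have hSinj : ∀ {p r : Polynomial K}, S p = S r → p = r := by
    intro p r h
    rw [← hSinv₁ p, h, hSinv₁]
  have hSDk : ∀ (k : ℕ) (p : Polynomial K), S ((D ^ k) p) = (D ^ k) (S p) := by
    intro k
    induction k with
    | zero => intro p; simp
    | succ k ih =>
      intro p
      rw [pow_succ, Module.End.mul_apply, Module.End.mul_apply, ih (D p), ← hDS, ← hcommD, hcommD]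
  have hSA : ∀ m : ℕ, S (A m) = X ^ m := by
    intro m; rw [hA, hSinv₂]
  -- iterated D on monomials
  have hDkX : ∀ n k : ℕ, k ≤ n →
      (D ^ k) (X ^ n : Polynomial K) = (nψfact n / nψfact (n - k)) • X ^ (n - k) := by
    intro n k
    induction k with
    | zero =>
      intro _
      simp only [pow_zero, Module.End.one_apply, Nat.sub_zero, div_self (hfactne n), one_smul]
    | succ k ih =>
      intro hk
      obtain ⟨m, hm⟩ : ∃ m, n - k = m + 1 := ⟨n - k - 1, by omega⟩
      rw [pow_succ', Module.End.mul_apply, ih (by omega), map_smul, hm, hD m]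
      have hnk1 : n - (k + 1) = m := by omega
      rw [hnk1, smul_smul]
      congr 1
      rw [hfact m, mul_comm (nψ (m + 1)) (nψfact m), ← div_div,
        div_mul_cancel₀ _ (hadm (m + 1) (by omega))]
  -- Appell property
  have hDA0 : D (A 0) = 0 := by
    apply hSinj
    rw [← hDS, hSA, pow_zero, hD1, map_zero]
  have hDA : ∀ m : ℕ, D (A (m + 1)) = nψ (m + 1) • A m := by
    intro m
    apply hSinj
    rw [← hDS, hSA, hD m, map_smul, hSA]
  have hDkA : ∀ n k : ℕ, k ≤ n →
      (D ^ k) (A n) = (nψfact n / nψfact (n - k)) • A (n - k) := by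
    intro n k
    induction k with
    | zero =>
      intro _
      simp only [pow_zero, Module.End.one_apply, Nat.sub_zero, div_self (hfactne n), one_smul]
    | succ k ih =>
      intro hk
      obtain ⟨m, hm⟩ : ∃ m, n - k = m + 1 := ⟨n - k - 1, by omega⟩
      rw [pow_succ', Module.End.mul_apply, ih (by omega), map_smul, hm, hDA m]
      have hnk1 : n - (k + 1) = m := by omega
      rw [hnk1, smul_smul]
      congr 1
      rw [hfact m, mul_comm (nψ (m + 1)) (nψfact m), ← div_div,
        div_mul_cancel₀ _ (hadm (m + 1) (by omega))]
  have hDAz : ∀ n k : ℕ, n < k → (D ^ k) (A n) = 0 := by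
    intro n k hk
    have base : (D ^ (n + 1)) (A n) = 0 := by
      rw [pow_succ', Module.End.mul_apply, hDkA n n le_rfl, map_smul, Nat.sub_self, hDA0,
        smul_zero]
    have step : ∀ j : ℕ, (D ^ (n + 1 + j)) (A n) = 0 := by
      intro j
      induction j with
      | zero => exact base
      | succ j ihj =>
        have : n + 1 + (j + 1) = (n + 1 + j) + 1 := by omega
        rw [this, pow_succ', Module.End.mul_apply, ihj, map_zero]
    have : k = n + 1 + (k - n - 1) := by omega
    rw [this]
    exact step _
  -- scalar identity from S (A j) = X^j
  have hXj : ∀ j : ℕ, (X : Polynomial K) ^ j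
      = ∑ k ∈ range (j + 1), (c k * (nψfact j / nψfact (j - k))) • A (j - k) := by
    intro j
    conv_lhs => rw [← hSA j]
    rw [hS (A j)]
    rw [hext2 c (A j) ((A j).natDegree + 1) (j + 1) (vdeg (A j))
      (fun k hk => hDAz j k (by omega))]
    refine Finset.sum_congr rfl ?_
    intro k hk
    simp only [mem_range] at hk
    rw [hDkA j k (by omega), smul_smul]
  have heval : ∀ (j : ℕ) (y : K), y ^ j
      = ∑ s ∈ range (j + 1), c (j - s) * (nψfact j / nψfact s) * (A s).eval y := by
    intro j y
    have h1 := congrArg (Polynomial.eval y) (hXj j)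
    rw [Polynomial.eval_pow, Polynomial.eval_X, Polynomial.eval_finset_sum] at h1
    simp only [Polynomial.eval_smul, smul_eq_mul] at h1
    rw [h1, ← Finset.sum_range_reflect]
    refine Finset.sum_congr rfl ?_
    intro s hs
    simp only [mem_range] at hs
    have e1 : j + 1 - 1 - s = j - s := by omega
    have e2 : j - (j - s) = s := by omega
    rw [e1, e2]
  -- main computation
  intro y n
  apply hSinj
  -- left-hand side
  have hL : S (E y (A n))
      = ∑ k ∈ range (n + 1), (y ^ k / nψfact k * (nψfact n / nψfact (n - k))) • X ^ (n - k) := by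
    rw [hE y (A n)]
    rw [hext2 (fun k => y ^ k / nψfact k) (A n) ((A n).natDegree + 1) (n + 1) (vdeg (A n))
      (fun k hk => hDAz n k (by omega))]
    rw [map_sum]
    refine Finset.sum_congr rfl ?_
    intro k hk
    simp only [mem_range] at hk
    rw [map_smul, hSDk, hSA, hDkX n k (by omega), smul_smul]
  rw [hL, map_sum]
  -- right-hand side
  have hR : ∀ s ∈ range (n + 1),
      S (((nψfact n / (nψfact s * nψfact (n - s))) * (A s).eval y) • X ^ (n - s))
      = ∑ t ∈ range (n - s + 1),
          ((nψfact n / (nψfact s * nψfact (n - s))) * (A s).eval y * c t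
            * (nψfact (n - s) / nψfact (n - s - t))) • X ^ (n - s - t) := by
    intro s hs
    rw [map_smul, hS (X ^ (n - s)), Polynomial.natDegree_X_pow, Finset.smul_sum]
    refine Finset.sum_congr rfl ?_
    intro t ht
    simp only [mem_range] at ht
    rw [hDkX (n - s) t (by omega), smul_smul, smul_smul]
  rw [Finset.sum_congr rfl hR]
  rw [tri_aux n (fun s t => ((nψfact n / (nψfact s * nψfact (n - s))) * (A s).eval y * c t
    * (nψfact (n - s) / nψfact (n - s - t))) • X ^ (n - s - t))]
  refine Finset.sum_congr rfl ?_
  intro j hj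
  simp only [mem_range] at hj
  have hinner : ∀ s ∈ range (j + 1),
      ((nψfact n / (nψfact s * nψfact (n - s))) * (A s).eval y * c (j - s)
        * (nψfact (n - s) / nψfact (n - s - (j - s)))) • (X : Polynomial K) ^ (n - s - (j - s))
      = ((nψfact n / (nψfact s * nψfact (n - s))) * (A s).eval y * c (j - s)
        * (nψfact (n - s) / nψfact (n - j))) • (X : Polynomial K) ^ (n - j) := by
    intro s hs
    simp only [mem_range] at hs
    have : n - s - (j - s) = n - j := by omega
    rw [this]
  rw [Finset.sum_congr rfl hinner, ← Finset.sum_smul]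
  congr 1
  rw [heval j y, Finset.sum_div, Finset.sum_mul]
  refine Finset.sum_congr rfl ?_
  intro s hs
  simp only [mem_range] at hs
  have h1 : nψfact s ≠ 0 := hfactne s
  have h2 : nψfact j ≠ 0 := hfactne j
  have h3 : nψfact (n - s) ≠ 0 := hfactne (n - s)
  have h4 : nψfact (n - j) ≠ 0 := hfactne (n - j)
  field_simp
end

section
/- With Q, S, A_n and a_n := A_n(0) as in the context, the ψ-exponential generating function identity holds in the formal power series ring (K[X])⟦z⟧: Σ_{n≥0} (A_n/n_ψ!)·z^n = (Σ_{n≥0} (a_n/n_ψ!)·z^n) · (Σ_{n≥0} (X^n/n_ψ!)·z^n). Equivalently, coefficientwise, for every n ≥ 0 one has A_n = Σ_{s=0}^{n} binom_ψ(n,s)·a_s·X^{n−s} in K[X]. -/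
open Polynomial Finset

/-- With `Q`, `S`, `A n` and `a n := (A n).eval 0` as in the
context, the ψ-exponential generating function identity holds in the formal
power series ring `(K[X])⟦z⟧`:
`Σ_{n≥0} (A n / n_ψ!) zⁿ = (Σ_{n≥0} (a n / n_ψ!) zⁿ) * (Σ_{n≥0} (Xⁿ / n_ψ!) zⁿ)`.
Equivalently, coefficientwise, for every `n ≥ 0` one has
`A n = Σ_{s=0}^{n} binom_ψ(n,s) • a s • X^(n-s)` in `K[X]`. -/
theorem stmt6 {K : Type*} [Field K] [CharZero K]
    (ψ : ℕ → K) (hψ : ∀ n, ψ n ≠ 0)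
    (nψ : ℕ → K) (hnψ0 : nψ 0 = 0)
    (hnψ : ∀ n : ℕ, 1 ≤ n → nψ n = ψ (n - 1) / ψ n)
    (hadm : ∀ n : ℕ, 1 ≤ n → nψ n ≠ 0)
    (nψfact : ℕ → K) (hfact0 : nψfact 0 = 1)
    (hfact : ∀ n : ℕ, nψfact (n + 1) = nψ (n + 1) * nψfact n)
    (D : Polynomial K →ₗ[K] Polynomial K)
    (hD : ∀ n : ℕ, D (X ^ (n + 1)) = nψ (n + 1) • X ^ n)
    (hD1 : D 1 = 0)
    (q : ℕ → K) (hq1 : q 1 ≠ 0)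
    (Q : Polynomial K →ₗ[K] Polynomial K)
    (hQ : ∀ p : Polynomial K,
      Q p = ∑ k ∈ Finset.range (p.natDegree + 1),
        (q (k + 1) / nψfact (k + 1)) • ((D ^ (k + 1)) p))
    (S : Polynomial K →ₗ[K] Polynomial K)
    (hS : ∀ p : Polynomial K,
      S p = ∑ k ∈ Finset.range (p.natDegree + 1),
        (q (k + 1) / nψfact (k + 1)) • ((D ^ k) p))
    (Sinv : Polynomial K →ₗ[K] Polynomial K)
    (hSinv₁ : ∀ p : Polynomial K, Sinv (S p) = p)
    (hSinv₂ : ∀ p : Polynomial K, S (Sinv p) = p)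
    (A : ℕ → Polynomial K)
    (hA : ∀ n : ℕ, A n = Sinv (X ^ n))
    (a : ℕ → K) (ha : ∀ n : ℕ, a n = (A n).eval 0) :
    (PowerSeries.mk (fun n => (nψfact n)⁻¹ • A n) =
      PowerSeries.mk (fun n => (C (a n / nψfact n) : Polynomial K)) *
      PowerSeries.mk (fun n => (nψfact n)⁻¹ • (X ^ n : Polynomial K))) ∧
    (∀ n : ℕ, A n = ∑ s ∈ Finset.range (n + 1),
      ((nψfact n / (nψfact s * nψfact (n - s))) * a s) • X ^ (n - s)) := by
  -- nψfact is never zero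
  have hfne : ∀ n, nψfact n ≠ 0 := by
    intro n
    induction n with
    | zero => rw [hfact0]; exact one_ne_zero
    | succ m ih => rw [hfact]; exact mul_ne_zero (hadm (m + 1) (by omega)) ih
  -- coefficient formula for D
  have coeffD : ∀ (p : Polynomial K) (i : ℕ),
      (D p).coeff i = nψ (i + 1) * p.coeff (i + 1) := by
    intro p
    induction p using Polynomial.induction_on' with
    | add p q hp hq => intro i; simp [hp, hq, mul_add]
    | monomial n t =>
      intro i
      have hm : (Polynomial.monomial n t : Polynomial K) = t • X ^ n := by
        rw [Polynomial.smul_eq_C_mul, Polynomial.C_mul_X_pow_eq_monomial]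
      rw [hm, map_smul]
      cases n with
      | zero =>
        simp [pow_zero, hD1, Polynomial.coeff_smul, Polynomial.coeff_one]
      | succ m =>
        rw [hD m]
        simp only [Polynomial.coeff_smul, Polynomial.coeff_X_pow, smul_eq_mul]
        rcases eq_or_ne i m with h | h
        · subst h; simp; ring
        · simp [h]
  -- coefficient formula for powers of D
  have coeffDpow : ∀ (k : ℕ) (p : Polynomial K) (i : ℕ),
      ((D ^ k) p).coeff i = (∏ j ∈ Finset.range k, nψ (i + j + 1)) * p.coeff (i + k) := by
    intro k
    induction k with
    | zero => intro p i; simp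
    | succ m ih =>
      intro p i
      rw [pow_succ, Module.End.mul_apply, ih, coeffD, Finset.prod_range_succ,
        show i + (m + 1) = i + m + 1 from by omega]
      ring
  -- powers of D kill polynomials of small degree
  have Dpow_zero : ∀ (p : Polynomial K) (k : ℕ), p.natDegree < k → (D ^ k) p = 0 := by
    intro p k hk
    ext i
    rw [coeffDpow, Polynomial.coeff_eq_zero_of_natDegree_lt (by omega), mul_zero,
      Polynomial.coeff_zero]
  -- D does not increase degree
  have hdegD : ∀ p : Polynomial K, (D p).natDegree ≤ p.natDegree := by
    intro p
    apply Polynomial.natDegree_le_iff_coeff_eq_zero.mpr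
    intro m hm
    rw [coeffD, Polynomial.coeff_eq_zero_of_natDegree_lt (by omega), mul_zero]
  -- S as a longer sum
  have hS' : ∀ (p : Polynomial K) (N : ℕ), p.natDegree < N →
      S p = ∑ k ∈ Finset.range N, (q (k + 1) / nψfact (k + 1)) • ((D ^ k) p) := by
    intro p N hN
    rw [hS]
    apply Finset.sum_subset
    · exact Finset.range_subset_range.mpr (by omega)
    · intro k hk hk2
      have hdk : p.natDegree < k := by
        simp only [Finset.mem_range] at hk hk2
        omega
      rw [Dpow_zero p k hdk, smul_zero]
  -- S commutes with D
  have hSD : ∀ p : Polynomial K, S (D p) = D (S p) := by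
    intro p
    rw [hS' (D p) (p.natDegree + 1) (by have := hdegD p; omega), hS p, map_sum]
    apply Finset.sum_congr rfl
    intro k _
    rw [map_smul]
    congr 1
    rw [← Module.End.mul_apply, ← Module.End.mul_apply, ← pow_succ, ← pow_succ']
  -- S is injective
  have Sinj : ∀ p p' : Polynomial K, S p = S p' → p = p' := by
    intro p p' h
    rw [← hSinv₁ p, h, hSinv₁]
  have hSA : ∀ n, S (A n) = X ^ n := by
    intro n; rw [hA, hSinv₂]
  -- the Appell property
  have appell : ∀ n : ℕ, D (A (n + 1)) = nψ (n + 1) • A n := by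
    intro n
    apply Sinj
    rw [hSD, hSA, hD, map_smul, hSA]
  -- kernel of D is constants
  have kerD : ∀ p : Polynomial K, D p = 0 → p = C (p.coeff 0) := by
    intro p hp
    ext i
    cases i with
    | zero => simp
    | succ j =>
      have h1 : (D p).coeff j = 0 := by rw [hp, Polynomial.coeff_zero]
      rw [coeffD] at h1
      have h2 := hadm (j + 1) (by omega)
      simp only [Polynomial.coeff_C, Nat.succ_ne_zero, if_false]
      exact (mul_eq_zero.mp h1).resolve_left h2
  have hDA0 : D (A 0) = 0 := by
    apply Sinj _ 0
    rw [hSD, hSA, pow_zero, hD1, map_zero]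
  -- the coefficientwise identity
  have part2 : ∀ n : ℕ, A n = ∑ s ∈ Finset.range (n + 1),
      ((nψfact n / (nψfact s * nψfact (n - s))) * a s) • X ^ (n - s) := by
    intro n
    induction n with
    | zero =>
      rw [kerD (A 0) hDA0, Polynomial.coeff_zero_eq_eval_zero, ← ha 0]
      simp [hfact0, Polynomial.smul_eq_C_mul]
    | succ n ih =>
      set B : Polynomial K := ∑ s ∈ Finset.range (n + 2),
        ((nψfact (n + 1) / (nψfact s * nψfact (n + 1 - s))) * a s) • X ^ (n + 1 - s)
        with hB
      have hDB : D B = nψ (n + 1) • A n := by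
        rw [hB, map_sum, ih, Finset.smul_sum, Finset.sum_range_succ]
        have hlast : D (((nψfact (n + 1) / (nψfact (n + 1) * nψfact (n + 1 - (n + 1)))) *
            a (n + 1)) • X ^ (n + 1 - (n + 1))) = 0 := by
          rw [map_smul, Nat.sub_self, pow_zero, hD1, smul_zero]
        rw [hlast, add_zero]
        apply Finset.sum_congr rfl
        intro s hs
        have hsn : s ≤ n := by
          simp only [Finset.mem_range] at hs; omega
        rw [map_smul, show n + 1 - s = (n - s) + 1 from by omega, hD, smul_smul, smul_smul]
        congr 1
        have u1 := hfne s
        have u2 := hfne (n - s)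
        have u3 := hadm (n - s + 1) (by omega)
        rw [hfact n, hfact (n - s)]
        field_simp
      have hzero : D (A (n + 1) - B) = 0 := by
        rw [map_sub, appell, hDB, sub_self]
      have hB0 : B.coeff 0 = a (n + 1) := by
        rw [hB, Polynomial.finset_sum_coeff, Finset.sum_range_succ]
        have hz : ∑ s ∈ Finset.range (n + 1),
            (((nψfact (n + 1) / (nψfact s * nψfact (n + 1 - s))) * a s) •
              (X : Polynomial K) ^ (n + 1 - s)).coeff 0 = 0 := by
          apply Finset.sum_eq_zero
          intro s hs
          have hsn : s ≤ n := by simp only [Finset.mem_range] at hs; omega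
          rw [Polynomial.coeff_smul, Polynomial.coeff_X_pow]
          simp [show ¬ (0 = n + 1 - s) from by omega]
        rw [hz, zero_add, Nat.sub_self, pow_zero, Polynomial.coeff_smul]
        have := hfne (n + 1)
        simp [hfact0, smul_eq_mul]
        field_simp
      have hdiff := kerD _ hzero
      have hc0 : (A (n + 1) - B).coeff 0 = 0 := by
        rw [Polynomial.coeff_sub, hB0, Polynomial.coeff_zero_eq_eval_zero, ← ha, sub_self]
      rw [hc0, map_zero] at hdiff
      have : A (n + 1) = B := by
        have := sub_eq_zero.mp hdiff
        exact this
      exact this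
  refine ⟨?_, part2⟩
  apply PowerSeries.ext
  intro n
  rw [PowerSeries.coeff_mk, PowerSeries.coeff_mul,
    Finset.Nat.sum_antidiagonal_eq_sum_range_succ_mk]
  simp only [PowerSeries.coeff_mk]
  rw [part2 n, Finset.smul_sum]
  apply Finset.sum_congr rfl
  intro s hs
  rw [smul_smul, Polynomial.smul_eq_C_mul, Polynomial.smul_eq_C_mul,
    ← mul_assoc (C (a s / nψfact s)), ← Polynomial.C_mul]
  congr 2
  have u1 := hfne n
  have u2 := hfne s
  have u3 := hfne (n - s)
  field_simp
end

section
/- With Q, S, A_n and a_n := A_n(0) as in the context, the ψ-Appell operator expansion holds: S⁻¹ = Σ_{n≥0} (a_n/n_ψ!)·∂_ψ^n, i.e. for every polynomial p ∈ K[X], S⁻¹(p) = Σ_{n=0}^{deg p} (a_n/n_ψ!)·∂_ψ^n(p). -/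
/-!
The ψ-Taylor formula `(∂_ψ^k p)(0) = k_ψ! · [X^k] p` shows that a polynomial is determined by the
values at `0` of its ψ-derivatives. Let `T` be an operator commuting with `∂_ψ`; `S⁻¹` is one, since
`S` is a series in `∂_ψ`. Applying `∂_ψ^k` and evaluating at `0`, both `T p` and
`Σ_n (T Xⁿ)(0) / n_ψ! · ∂_ψ^n p` become the linear functional `p ↦ Σ_n [Xⁿ](∂_ψ^k p) · (T Xⁿ)(0)`,
so they are equal.
-/

open Polynomial Finset

section

variable {K : Type*} [Field K]

structure IsPsiDerivative (c : ℕ → K) (D : K[X] →ₗ[K] K[X]) : Prop where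
  apply_X_pow_succ : ∀ n, D (X ^ (n + 1)) = c (n + 1) • X ^ n
  apply_one : D 1 = 0

def psiFactorial (c : ℕ → K) (n : ℕ) : K := ∏ j ∈ range n, c (j + 1)

section psiFactorial

variable {c : ℕ → K}

@[simp]
theorem psiFactorial_zero : psiFactorial c 0 = 1 := prod_range_zero _

theorem psiFactorial_succ (n : ℕ) : psiFactorial c (n + 1) = c (n + 1) * psiFactorial c n := by
  rw [psiFactorial, prod_range_succ, mul_comm, psiFactorial]

theorem eq_psiFactorial {f : ℕ → K} (h0 : f 0 = 1) (h : ∀ n, f (n + 1) = c (n + 1) * f n) :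
    f = psiFactorial c := by
  funext n
  induction n with
  | zero => rw [h0, psiFactorial_zero]
  | succ n ih => rw [h, ih, psiFactorial_succ]

theorem psiFactorial_ne_zero (hc : ∀ n, 1 ≤ n → c n ≠ 0) (n : ℕ) : psiFactorial c n ≠ 0 :=
  prod_ne_zero_iff.mpr fun j _ => hc (j + 1) j.succ_pos

end psiFactorial

theorem Polynomial.eval_zero_linearMap_apply (T : K[X] →ₗ[K] K[X]) {p : K[X]} {N : ℕ}
    (h : p.natDegree ≤ N) :
    (T p).eval 0 = ∑ n ∈ range (N + 1), p.coeff n * (T (X ^ n)).eval 0 := by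
  conv_lhs => rw [p.as_sum_range' (N + 1) (by omega)]
  simp only [map_sum, eval_finsetSum, ← C_mul_X_pow_eq_monomial, ← smul_eq_C_mul, map_smul,
    eval_smul, smul_eq_mul]

namespace IsPsiDerivative

variable {c : ℕ → K} {D : K[X] →ₗ[K] K[X]} (hD : IsPsiDerivative c D)
include hD

theorem coeff_apply (p : K[X]) (n : ℕ) : (D p).coeff n = c (n + 1) * p.coeff (n + 1) := by
  induction p using Polynomial.induction_on' with
  | add p r hp hr => rw [map_add, coeff_add, hp, hr, coeff_add, mul_add]
  | monomial m a =>
    rw [← C_mul_X_pow_eq_monomial, ← smul_eq_C_mul, map_smul, coeff_smul, coeff_smul,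
      smul_eq_mul, smul_eq_mul, mul_left_comm]
    cases m with
    | zero => simp [hD.apply_one, coeff_one]
    | succ m =>
      rw [hD.apply_X_pow_succ, coeff_smul, coeff_X_pow, coeff_X_pow, smul_eq_mul]
      by_cases h : n = m <;> simp [h]

theorem psiFactorial_mul_coeff_iterate_apply (k : ℕ) (p : K[X]) (n : ℕ) :
    psiFactorial c n * ((D ^ k) p).coeff n = psiFactorial c (n + k) * p.coeff (n + k) := by
  induction k generalizing p with
  | zero => rfl
  | succ k ih =>
    rw [pow_succ, Module.End.mul_apply, ih, hD.coeff_apply, ← add_assoc, psiFactorial_succ,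
      mul_assoc, mul_left_comm]

theorem eval_zero_iterate_apply (k : ℕ) (p : K[X]) :
    ((D ^ k) p).eval 0 = psiFactorial c k * p.coeff k := by
  simpa [coeff_zero_eq_eval_zero] using hD.psiFactorial_mul_coeff_iterate_apply k p 0

variable (hc : ∀ n, 1 ≤ n → c n ≠ 0)
include hc

theorem coeff_iterate_apply_eq_zero {p : K[X]} {k n : ℕ} (h : p.natDegree < n + k) :
    ((D ^ k) p).coeff n = 0 := by
  have := hD.psiFactorial_mul_coeff_iterate_apply k p n
  rwa [coeff_eq_zero_of_natDegree_lt h, mul_zero, mul_eq_zero,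
    or_iff_right (psiFactorial_ne_zero hc n)] at this

theorem iterate_apply_eq_zero_of_natDegree_lt {p : K[X]} {k : ℕ} (h : p.natDegree < k) :
    (D ^ k) p = 0 :=
  ext fun n => hD.coeff_iterate_apply_eq_zero hc (by omega)

theorem natDegree_iterate_apply_le (k : ℕ) (p : K[X]) : ((D ^ k) p).natDegree ≤ p.natDegree :=
  natDegree_le_iff_coeff_eq_zero.mpr fun n hn =>
    hD.coeff_iterate_apply_eq_zero hc (by have := Nat.cast_lt.mp hn; omega)

theorem natDegree_apply_le (p : K[X]) : (D p).natDegree ≤ p.natDegree := by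
  simpa using hD.natDegree_iterate_apply_le hc 1 p

theorem eq_of_eval_zero_iterate_apply_eq {p r : K[X]}
    (h : ∀ k, ((D ^ k) p).eval 0 = ((D ^ k) r).eval 0) : p = r :=
  ext fun k => mul_left_cancel₀ (psiFactorial_ne_zero hc k) <| by
    rw [← hD.eval_zero_iterate_apply, ← hD.eval_zero_iterate_apply, h]

theorem sum_range_smul_iterate_apply_of_natDegree_le (f : ℕ → K) {p : K[X]} {N : ℕ}
    (h : p.natDegree ≤ N) :
    ∑ k ∈ range (N + 1), f k • (D ^ k) p = ∑ k ∈ range (p.natDegree + 1), f k • (D ^ k) p :=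
  (sum_subset (range_subset_range.mpr (by omega)) fun k _ hk => by
    rw [hD.iterate_apply_eq_zero_of_natDegree_lt hc (by simpa using hk), smul_zero]).symm

theorem commute_of_forall_eq_sum {S : K[X] →ₗ[K] K[X]} (f : ℕ → K)
    (hS : ∀ p, S p = ∑ k ∈ range (p.natDegree + 1), f k • (D ^ k) p) : Commute S D := by
  refine LinearMap.ext fun p => ?_
  rw [Module.End.mul_apply, Module.End.mul_apply, hS, hS, map_sum,
    ← hD.sum_range_smul_iterate_apply_of_natDegree_le hc f (hD.natDegree_apply_le hc p)]
  refine sum_congr rfl fun k _ => ?_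
  rw [map_smul, ← Module.End.mul_apply, ← pow_succ, pow_succ']
  rfl

theorem eq_sum_of_commute {T : K[X] →ₗ[K] K[X]} (hT : Commute T D) (p : K[X]) :
    T p = ∑ n ∈ range (p.natDegree + 1),
      ((T (X ^ n)).eval 0 / psiFactorial c n) • (D ^ n) p := by
  refine hD.eq_of_eval_zero_iterate_apply_eq hc fun k => ?_
  calc ((D ^ k) (T p)).eval 0 = (T ((D ^ k) p)).eval 0 := by
        rw [← Module.End.mul_apply, ← (hT.pow_right k).eq, Module.End.mul_apply]
    _ = ∑ n ∈ range (p.natDegree + 1), ((D ^ k) p).coeff n * (T (X ^ n)).eval 0 :=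
        eval_zero_linearMap_apply T (hD.natDegree_iterate_apply_le hc k p)
    _ = _ := by
        rw [map_sum, eval_finsetSum]
        refine sum_congr rfl fun n _ => ?_
        rw [map_smul, eval_smul, ← Module.End.mul_apply, ← pow_add, add_comm, pow_add,
          Module.End.mul_apply, hD.eval_zero_iterate_apply, smul_eq_mul]
        field_simp [psiFactorial_ne_zero hc n]

end IsPsiDerivative

end

theorem stmt7_general {K : Type*} [Field K]
    (nψ : ℕ → K)
    (hadm : ∀ n : ℕ, 1 ≤ n → nψ n ≠ 0)
    (nψfact : ℕ → K) (hfact0 : nψfact 0 = 1)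
    (hfact : ∀ n : ℕ, nψfact (n + 1) = nψ (n + 1) * nψfact n)
    (D : Polynomial K →ₗ[K] Polynomial K)
    (hD : ∀ n : ℕ, D (X ^ (n + 1)) = nψ (n + 1) • X ^ n)
    (hD1 : D 1 = 0)
    (q : ℕ → K)
    (S : Polynomial K →ₗ[K] Polynomial K)
    (hS : ∀ p : Polynomial K,
      S p = ∑ k ∈ Finset.range (p.natDegree + 1),
        (q (k + 1) / nψfact (k + 1)) • ((D ^ k) p))
    (Sinv : Polynomial K →ₗ[K] Polynomial K)
    (hSinv₁ : ∀ p : Polynomial K, Sinv (S p) = p)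
    (hSinv₂ : ∀ p : Polynomial K, S (Sinv p) = p)
    (A : ℕ → Polynomial K)
    (hA : ∀ n : ℕ, A n = Sinv (X ^ n))
    (a : ℕ → K) (ha : ∀ n : ℕ, a n = (A n).eval 0) :
    ∀ p : Polynomial K,
      Sinv p = ∑ n ∈ Finset.range (p.natDegree + 1),
        (a n / nψfact n) • ((D ^ n) p) := by
  have hψ : IsPsiDerivative nψ D := ⟨hD, hD1⟩
  obtain rfl : nψfact = psiFactorial nψ := eq_psiFactorial hfact0 hfact
  let u : (Module.End K K[X])ˣ := ⟨S, Sinv, LinearMap.ext hSinv₂, LinearMap.ext hSinv₁⟩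
  have hSinv : Commute Sinv D := (hψ.commute_of_forall_eq_sum hadm _ hS).units_inv_left (u := u)
  intro p
  simpa only [ha, hA] using hψ.eq_sum_of_commute hadm hSinv p

/-- With `Q`, `S`, `A n` and `a n := (A n).eval 0` as in the
context, the ψ-Appell operator expansion holds:
`S⁻¹ = Σ_{n≥0} (a n / n_ψ!) ∂_ψ^n`, i.e. for every `p ∈ K[X]`,
`S⁻¹ p = Σ_{n=0}^{deg p} (a n / n_ψ!) • ∂_ψ^n p`. -/
theorem stmt7 {K : Type*} [Field K] [CharZero K]
    (ψ : ℕ → K) (hψ : ∀ n, ψ n ≠ 0)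
    (nψ : ℕ → K) (hnψ0 : nψ 0 = 0)
    (hnψ : ∀ n : ℕ, 1 ≤ n → nψ n = ψ (n - 1) / ψ n)
    (hadm : ∀ n : ℕ, 1 ≤ n → nψ n ≠ 0)
    (nψfact : ℕ → K) (hfact0 : nψfact 0 = 1)
    (hfact : ∀ n : ℕ, nψfact (n + 1) = nψ (n + 1) * nψfact n)
    (D : Polynomial K →ₗ[K] Polynomial K)
    (hD : ∀ n : ℕ, D (X ^ (n + 1)) = nψ (n + 1) • X ^ n)
    (hD1 : D 1 = 0)
    (q : ℕ → K) (hq1 : q 1 ≠ 0)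
    (Q : Polynomial K →ₗ[K] Polynomial K)
    (hQ : ∀ p : Polynomial K,
      Q p = ∑ k ∈ Finset.range (p.natDegree + 1),
        (q (k + 1) / nψfact (k + 1)) • ((D ^ (k + 1)) p))
    (S : Polynomial K →ₗ[K] Polynomial K)
    (hS : ∀ p : Polynomial K,
      S p = ∑ k ∈ Finset.range (p.natDegree + 1),
        (q (k + 1) / nψfact (k + 1)) • ((D ^ k) p))
    (Sinv : Polynomial K →ₗ[K] Polynomial K)
    (hSinv₁ : ∀ p : Polynomial K, Sinv (S p) = p)
    (hSinv₂ : ∀ p : Polynomial K, S (Sinv p) = p)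
    (A : ℕ → Polynomial K)
    (hA : ∀ n : ℕ, A n = Sinv (X ^ n))
    (a : ℕ → K) (ha : ∀ n : ℕ, a n = (A n).eval 0) :
    ∀ p : Polynomial K,
      Sinv p = ∑ n ∈ Finset.range (p.natDegree + 1),
        (a n / nψfact n) • ((D ^ n) p) :=
  stmt7_general nψ hadm nψfact hfact0 hfact D hD hD1 q S hS Sinv hSinv₁ hSinv₂ A hA a ha
end

section
/- With Q, S, A_n and a_n := A_n(0) as in the context, let f, φ ∈ K[X] satisfy Q(f) = φ. Then ∂_ψ(f) = Σ_{n=0}^{deg φ} (a_n/n_ψ!)·φ^{(n)}, where φ^{(0)} := φ and φ^{(n)} := ∂_ψ(φ^{(n−1)}). -/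
open Polynomial Finset

/-- With `Q`, `S`, `A n` and `a n := (A n).eval 0` as in the
context, let `f, φ ∈ K[X]` satisfy `Q f = φ`.  Then
`∂_ψ f = Σ_{n=0}^{deg φ} (a n / n_ψ!) • φ⁽ⁿ⁾`, where `φ⁽⁰⁾ := φ` and
`φ⁽ⁿ⁾ := ∂_ψ φ⁽ⁿ⁻¹⁾`, i.e. `φ⁽ⁿ⁾ = ∂_ψ^n φ`. -/
theorem stmt8 {K : Type*} [Field K] [CharZero K]
    (ψ : ℕ → K) (hψ : ∀ n, ψ n ≠ 0)
    (nψ : ℕ → K) (hnψ0 : nψ 0 = 0)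
    (hnψ : ∀ n : ℕ, 1 ≤ n → nψ n = ψ (n - 1) / ψ n)
    (hadm : ∀ n : ℕ, 1 ≤ n → nψ n ≠ 0)
    (nψfact : ℕ → K) (hfact0 : nψfact 0 = 1)
    (hfact : ∀ n : ℕ, nψfact (n + 1) = nψ (n + 1) * nψfact n)
    (D : Polynomial K →ₗ[K] Polynomial K)
    (hD : ∀ n : ℕ, D (X ^ (n + 1)) = nψ (n + 1) • X ^ n)
    (hD1 : D 1 = 0)
    (q : ℕ → K) (hq1 : q 1 ≠ 0)
    (Q : Polynomial K →ₗ[K] Polynomial K)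
    (hQ : ∀ p : Polynomial K,
      Q p = ∑ k ∈ Finset.range (p.natDegree + 1),
        (q (k + 1) / nψfact (k + 1)) • ((D ^ (k + 1)) p))
    (S : Polynomial K →ₗ[K] Polynomial K)
    (hS : ∀ p : Polynomial K,
      S p = ∑ k ∈ Finset.range (p.natDegree + 1),
        (q (k + 1) / nψfact (k + 1)) • ((D ^ k) p))
    (Sinv : Polynomial K →ₗ[K] Polynomial K)
    (hSinv₁ : ∀ p : Polynomial K, Sinv (S p) = p)
    (hSinv₂ : ∀ p : Polynomial K, S (Sinv p) = p)
    (A : ℕ → Polynomial K)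
    (hA : ∀ n : ℕ, A n = Sinv (X ^ n))
    (a : ℕ → K) (ha : ∀ n : ℕ, a n = (A n).eval 0)
    (f φ : Polynomial K) (hf : Q f = φ)
    (φiter : ℕ → Polynomial K)
    (hφ0 : φiter 0 = φ)
    (hφn : ∀ n : ℕ, φiter (n + 1) = D (φiter n)) :
    D f = ∑ n ∈ Finset.range (φ.natDegree + 1),
      (a n / nψfact n) • φiter n := by

  -- factorials are nonzero
  have hfne : ∀ n, nψfact n ≠ 0 := by
    intro n
    induction n with
    | zero => rw [hfact0]; exact one_ne_zero
    | succ m ih => rw [hfact]; exact mul_ne_zero (hadm (m+1) (by omega)) ih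
  -- D on all powers of X (with truncated subtraction)
  have hDX : ∀ i : ℕ, D (X ^ i : Polynomial K) = nψ i • X ^ (i - 1) := by
    intro i
    cases i with
    | zero => simpa [hnψ0] using hD1
    | succ m => simpa using hD m
  -- coefficients of D p
  have hDcoeff : ∀ (p : Polynomial K) (n : ℕ),
      (D p).coeff n = nψ (n+1) * p.coeff (n+1) := by
    intro p
    induction p using Polynomial.induction_on' with
    | add p r hp hr => intro n; simp [map_add, hp, hr, mul_add]
    | monomial i cc =>
      intro n
      rw [← smul_X_eq_monomial, map_smul, hDX]
      rcases i with _ | m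
      · simp [hnψ0, coeff_one]
      · simp only [Nat.succ_sub_one, coeff_smul, coeff_X_pow, smul_eq_mul]
        by_cases h : m = n
        · subst h; simp [mul_comm]
        · have h' : n ≠ m := fun hh => h hh.symm
          simp [h, h', fun hh => h (Nat.succ_injective hh)]
  -- coefficients of D^k p
  have hDpowcoeff : ∀ (k : ℕ) (p : Polynomial K) (n : ℕ),
      ((D^k) p).coeff n = (∏ j ∈ range k, nψ (n+j+1)) * p.coeff (n+k) := by
    intro k
    induction k with
    | zero => simp
    | succ m ih =>
      intro p n
      rw [pow_succ', Module.End.mul_apply, hDcoeff, ih, Finset.prod_range_succ']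
      have e1 : ∀ j, n + 1 + j + 1 = n + (j+1) + 1 := by omega
      have e2 : n + 1 + m = n + (m+1) := by omega
      simp only [e1, e2, Nat.add_zero]
      ring
  -- D^k kills low-degree polynomials
  have hDzero : ∀ (k : ℕ) (p : Polynomial K), p.natDegree < k → (D^k) p = 0 := by
    intro k p h
    ext n
    rw [hDpowcoeff, coeff_eq_zero_of_natDegree_lt (by omega), mul_zero, coeff_zero]
  -- D^k on powers of X
  have hDkX : ∀ (i k : ℕ), k ≤ i →
      (D^k) (X^i : Polynomial K) = (nψfact i / nψfact (i-k)) • X^(i-k) := by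
    intro i k
    induction k with
    | zero => intro _; simp [div_self (hfne i)]
    | succ m ih =>
      intro h
      rw [pow_succ', Module.End.mul_apply, ih (by omega), map_smul, hDX, smul_smul]
      have h1 : 1 ≤ i - m := by omega
      have h2 : i - m = (i - (m+1)) + 1 := by omega
      have h3 : i - m - 1 = i - (m+1) := by omega
      rw [h3]
      congr 1
      rw [h2, hfact]
      have hnz : nψ (i - (m + 1) + 1) ≠ 0 := hadm _ (by omega)
      field_simp
  -- degree bound for D
  have hdegD : ∀ p : Polynomial K, (D p).natDegree ≤ p.natDegree := by
    intro p
    rw [natDegree_le_iff_coeff_eq_zero]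
    intro m hm
    rw [hDcoeff, coeff_eq_zero_of_natDegree_lt (by omega), mul_zero]
  -- S with the sum extended to any long enough range
  have hSstable : ∀ (p : Polynomial K) (N : ℕ), p.natDegree ≤ N →
      S p = ∑ k ∈ range (N+1), (q (k+1) / nψfact (k+1)) • ((D^k) p) := by
    intro p N hN
    rw [hS p]
    apply Finset.sum_subset
    · intro x hx; simp only [mem_range] at *; omega
    · intro k _ hk2
      simp only [mem_range, not_lt] at hk2
      rw [hDzero k p (by omega), smul_zero]
  -- Q = S ∘ D
  have hQS : ∀ p : Polynomial K, Q p = S (D p) := by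
    intro p
    rw [hQ p, hSstable (D p) p.natDegree (hdegD p)]
    refine Finset.sum_congr rfl fun k _ => ?_
    rw [← Module.End.mul_apply, ← pow_succ]
  -- D commutes with S
  have hDS : ∀ p : Polynomial K, D (S p) = S (D p) := by
    intro p
    rw [hS p, map_sum, hSstable (D p) p.natDegree (hdegD p)]
    refine Finset.sum_congr rfl fun k _ => ?_
    rw [map_smul, ← Module.End.mul_apply, ← pow_succ', pow_succ, Module.End.mul_apply]
  -- D commutes with Sinv
  have hDSinv : ∀ p : Polynomial K, D (Sinv p) = Sinv (D p) := by
    intro p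
    calc D (Sinv p) = Sinv (S (D (Sinv p))) := (hSinv₁ _).symm
      _ = Sinv (D (S (Sinv p))) := by rw [hDS]
      _ = Sinv (D p) := by rw [hSinv₂]
  -- kernel of D consists of constants
  have hker : ∀ p : Polynomial K, D p = 0 → p = Polynomial.C (p.eval 0) := by
    intro p hp
    rw [← coeff_zero_eq_eval_zero]
    ext n
    cases n with
    | zero => simp
    | succ m =>
      have h1 := hDcoeff p m
      rw [hp, coeff_zero] at h1
      have h2 : p.coeff (m+1) = 0 := by
        rcases mul_eq_zero.mp h1.symm with h | h
        · exact absurd h (hadm (m+1) (by omega))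
        · exact h
      simp [h2, coeff_C]
  -- Appell property
  have hDA : ∀ m : ℕ, D (A (m+1)) = nψ (m+1) • A m := by
    intro m
    rw [hA, hA, hDSinv, hD, map_smul]
  -- evaluation at 0 of D^n X^m
  have heval : ∀ (m n : ℕ), n ≤ m →
      Polynomial.eval 0 ((D^n) (X^m : Polynomial K)) = if n = m then nψfact m else 0 := by
    intro m n h
    rw [hDkX m n h]
    by_cases hnm : n = m
    · subst hnm; simp [hfact0]
    · have h1 : 1 ≤ m - n := by omega
      simp [hnm, zero_pow (by omega : m - n ≠ 0)]
  -- KEY: expansion of Appell polynomials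
  have hKEY : ∀ m : ℕ, A m = ∑ n ∈ range (m+1),
      (a n / nψfact n) • ((D^n) (X^m : Polynomial K)) := by
    intro m
    induction m with
    | zero =>
      have h0 : D (A 0) = 0 := by
        rw [hA, pow_zero, hDSinv, hD1, map_zero]
      rw [hker (A 0) h0, ← ha 0]
      simp [hfact0, smul_eq_C_mul]
    | succ m ih =>
      set B : Polynomial K := ∑ n ∈ range (m+2),
        (a n / nψfact n) • ((D^n) (X^(m+1) : Polynomial K)) with hB
      have hDB : D B = nψ (m+1) • A m := by
        rw [hB, map_sum, Finset.sum_range_succ]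
        have hz : D ((D^(m+1)) (X^(m+1) : Polynomial K)) = 0 := by
          rw [← Module.End.mul_apply, ← pow_succ',
            hDzero (m+2) _ (by rw [natDegree_X_pow]; omega)]
        rw [map_smul, hz, smul_zero, add_zero]
        have : ∀ n ∈ range (m+1),
            D ((a n / nψfact n) • ((D^n) (X^(m+1) : Polynomial K)))
            = nψ (m+1) • ((a n / nψfact n) • ((D^n) (X^m : Polynomial K))) := by
          intro n _
          rw [map_smul, ← Module.End.mul_apply, ← pow_succ', pow_succ,
            Module.End.mul_apply, hD, map_smul, smul_comm]
        rw [Finset.sum_congr rfl this, ← Finset.smul_sum, ← ih]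
      have hdiff : D (A (m+1) - B) = 0 := by
        rw [map_sub, hDA m, hDB, sub_self]
      have hev : (A (m+1) - B).eval 0 = 0 := by
        have hBev : B.eval 0 = a (m+1) := by
          rw [hB, eval_finset_sum]
          rw [Finset.sum_eq_single (m+1)]
          · rw [eval_smul, heval (m+1) (m+1) le_rfl]
            simp [div_mul_cancel₀ _ (hfne (m+1))]
          · intro n hn hne
            simp only [mem_range] at hn
            rw [eval_smul, heval (m+1) n (by omega)]
            simp [hne]
          · intro h; exact absurd (by simp) h
        rw [eval_sub, hBev, ← ha, sub_self]
      have : A (m+1) - B = 0 := by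
        rw [hker _ hdiff, hev, map_zero]
      have := sub_eq_zero.mp this
      rw [this]
  -- D f = Sinv φ
  have hDf : D f = Sinv φ := by
    have : S (D f) = φ := by rw [← hQS, hf]
    calc D f = Sinv (S (D f)) := (hSinv₁ _).symm
      _ = Sinv φ := by rw [this]
  -- iterates of D on φ
  have hφiter : ∀ n : ℕ, φiter n = (D^n) φ := by
    intro n
    induction n with
    | zero => simpa using hφ0
    | succ m ih => rw [hφn m, ih, ← Module.End.mul_apply, ← pow_succ']
  -- assemble
  rw [hDf]
  set d := φ.natDegree with hd
  have expand : Sinv φ = ∑ i ∈ range (d+1), φ.coeff i • A i := by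
    conv_lhs => rw [as_sum_range φ]
    rw [map_sum]
    refine Finset.sum_congr rfl fun i _ => ?_
    rw [← smul_X_eq_monomial, map_smul, hA]
  rw [expand]
  have step2 : ∀ i ∈ range (d+1), φ.coeff i • A i
      = ∑ n ∈ range (d+1), φ.coeff i • ((a n / nψfact n) • ((D^n) (X^i : Polynomial K))) := by
    intro i hi
    simp only [mem_range] at hi
    rw [hKEY i, Finset.smul_sum]
    apply Finset.sum_subset
    · intro x hx; simp only [mem_range] at *; omega
    · intro n _ hn
      simp only [mem_range, not_lt] at hn
      rw [hDzero n _ (by rw [natDegree_X_pow]; omega), smul_zero, smul_zero]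
  rw [Finset.sum_congr rfl step2, Finset.sum_comm]
  refine Finset.sum_congr rfl fun n _ => ?_
  rw [hφiter n]
  conv_rhs => rw [as_sum_range φ]
  rw [map_sum, Finset.smul_sum]
  refine Finset.sum_congr rfl fun i _ => ?_
  rw [← smul_X_eq_monomial, map_smul, smul_comm]
end

section
/- Define the ψ-Hermite polynomials by H_n := Σ_{k≥0} ((−1/2)^k/k_ψ!)·∂_ψ^{2k}(X^n) for n ≥ 0 (a finite sum for each n). Then the sequence (H_n) is a ψ-Appell sequence: ∂_ψ(H_n) = n_ψ·H_{n−1} for all n ≥ 1, and ∂_ψ(H_0) = 0. -/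
/-!
`∂_ψ` commutes with its own powers, so applying it to `H (m + 1)` turns every `X ^ (m + 1)` into
`(m + 1)_ψ • X ^ m`; the sum for `H (m + 1)` has one summand more than that for `H m`, and it
vanishes because `∂_ψ ^ (2 (m + 1))` kills `X ^ m`.
-/

open Polynomial Finset

theorem Module.End.apply_sum_smul_pow_apply {ι R M : Type*} [CommSemiring R] [AddCommMonoid M]
    [Module R M] (f : Module.End R M) (s : Finset ι) (c : ι → R) (e : ι → ℕ) (x : M) :
    f (∑ k ∈ s, c k • (f ^ e k) x) = ∑ k ∈ s, c k • (f ^ e k) (f x) := by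
  simp only [map_sum, map_smul, ← Module.End.mul_apply, (Commute.self_pow f _).eq]

theorem pow_apply_X_pow_of_lt {R : Type*} [CommSemiring R] (nψ : ℕ → R)
    (D : R[X] →ₗ[R] R[X]) (hD : ∀ n : ℕ, D (X ^ (n + 1)) = nψ (n + 1) • X ^ n) (hD1 : D 1 = 0)
    {j m : ℕ} (hjm : j < m) : (D ^ m) (X ^ j : R[X]) = 0 := by
  have hkill : ∀ j : ℕ, (D ^ (j + 1)) (X ^ j : R[X]) = 0 := by
    intro j
    induction j with
    | zero => simpa using hD1
    | succ j ih => rw [pow_succ, Module.End.mul_apply, hD, map_smul, ih, smul_zero]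
  obtain ⟨c, rfl⟩ := Nat.exists_eq_add_of_lt hjm
  rw [show j + c + 1 = c + (j + 1) by omega, pow_add, Module.End.mul_apply, hkill, map_zero]

theorem stmt12_general {K : Type*} [Field K]
    (nψ : ℕ → K)
    (nψfact : ℕ → K)
    (D : Polynomial K →ₗ[K] Polynomial K)
    (hD : ∀ n : ℕ, D (X ^ (n + 1)) = nψ (n + 1) • X ^ n)
    (hD1 : D 1 = 0)
    (H : ℕ → Polynomial K)
    (hH : ∀ n : ℕ, H n = ∑ k ∈ Finset.range (n + 1),
      ((-(1 : K) / 2) ^ k / nψfact k) • ((D ^ (2 * k)) (X ^ n))) :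
    (∀ n : ℕ, 1 ≤ n → D (H n) = nψ n • H (n - 1)) ∧
    D (H 0) = 0 := by
  refine ⟨fun n hn => ?_, by simp [hH, hD1]⟩
  obtain ⟨m, rfl⟩ : ∃ m, n = m + 1 := ⟨n - 1, by omega⟩
  have htop : (D ^ (2 * (m + 1))) (X ^ m : K[X]) = 0 := pow_apply_X_pow_of_lt nψ D hD hD1 (by omega)
  rw [hH, hH, Module.End.apply_sum_smul_pow_apply, hD, Nat.add_sub_cancel, sum_range_succ,
    map_smul, htop, smul_zero, smul_zero, add_zero, smul_sum]
  exact sum_congr rfl fun k _ => by rw [map_smul, smul_comm]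

/-- Define the ψ-Hermite polynomials by
`H n := Σ_{k≥0} ((-1/2)^k / k_ψ!) • ∂_ψ^(2k) (Xⁿ)` (a finite sum for each `n`:
the terms with `2k > n` vanish).  Then `(H n)` is a ψ-Appell sequence:
`∂_ψ (H n) = n_ψ • H (n-1)` for all `n ≥ 1`, and `∂_ψ (H 0) = 0`. -/
theorem stmt12 {K : Type*} [Field K] [CharZero K]
    (ψ : ℕ → K) (hψ : ∀ n, ψ n ≠ 0)
    (nψ : ℕ → K) (hnψ0 : nψ 0 = 0)
    (hnψ : ∀ n : ℕ, 1 ≤ n → nψ n = ψ (n - 1) / ψ n)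
    (hadm : ∀ n : ℕ, 1 ≤ n → nψ n ≠ 0)
    (nψfact : ℕ → K) (hfact0 : nψfact 0 = 1)
    (hfact : ∀ n : ℕ, nψfact (n + 1) = nψ (n + 1) * nψfact n)
    (D : Polynomial K →ₗ[K] Polynomial K)
    (hD : ∀ n : ℕ, D (X ^ (n + 1)) = nψ (n + 1) • X ^ n)
    (hD1 : D 1 = 0)
    (H : ℕ → Polynomial K)
    (hH : ∀ n : ℕ, H n = ∑ k ∈ Finset.range (n + 1),
      ((-(1 : K) / 2) ^ k / nψfact k) • ((D ^ (2 * k)) (X ^ n))) :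
    (∀ n : ℕ, 1 ≤ n → D (H n) = nψ n • H (n - 1)) ∧
    D (H 0) = 0 :=
  stmt12_general nψ nψfact D hD hD1 H hH
end

section
/- Let x̂_ψ be the K-linear endomorphism of K[X] determined by x̂_ψ(X^m) = ((m+1)/(m+1)_ψ)·X^{m+1} for all m ≥ 0 (the natural number m+1 regarded in K via the characteristic-zero embedding). Then for every n ≥ 1, the ψ-Laguerre polynomial L_{n,ψ} := (n_ψ/n)·x̂_ψ((∂_ψ − id)^n(X^{n−1})) admits the explicit expansion L_{n,ψ} = (n_ψ/n)·Σ_{k=1}^{n} (−1)^k·C(n,k)·(n−1)_ψ^{\underline{n−k}}·(k/k_ψ)·X^k, where C(n,k) is the ordinary binomial coefficient and (m)_ψ^{\underline{j}} := ∏_{i=0}^{j−1} (m−i)_ψ (with (m)_ψ^{\underline{0}} := 1). -/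
open Polynomial Finset

/-- Let `x̂_ψ` be the `K`-linear endomorphism of `K[X]` with
`x̂_ψ (X^m) = ((m+1)/(m+1)_ψ) • X^(m+1)`.  Then for every `n ≥ 1` the ψ-Laguerre
polynomial `L n := (n_ψ/n) • x̂_ψ ((∂_ψ − id)^n (X^(n-1)))` admits the expansion
`L n = (n_ψ/n) • Σ_{k=1}^{n} (−1)^k C(n,k) (n−1)_ψ^{\underline{n−k}} (k/k_ψ) • X^k`. -/
theorem stmt14 {K : Type*} [Field K] [CharZero K]
    (ψ : ℕ → K) (hψ : ∀ n, ψ n ≠ 0)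
    (nψ : ℕ → K) (hnψ0 : nψ 0 = 0)
    (hnψ : ∀ n : ℕ, 1 ≤ n → nψ n = ψ (n - 1) / ψ n)
    (hadm : ∀ n : ℕ, 1 ≤ n → nψ n ≠ 0)
    (D : Polynomial K →ₗ[K] Polynomial K)
    (hD : ∀ n : ℕ, D (X ^ (n + 1)) = nψ (n + 1) • X ^ n)
    (hD1 : D 1 = 0)
    (Xop : Polynomial K →ₗ[K] Polynomial K)
    (hXop : ∀ m : ℕ, Xop (X ^ m) = (((m : K) + 1) / nψ (m + 1)) • X ^ (m + 1))
    (L : ℕ → Polynomial K)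
    (hL : ∀ n : ℕ, 1 ≤ n → L n = (nψ n / (n : K)) •
      Xop (((D - LinearMap.id : Module.End K (Polynomial K)) ^ n) (X ^ (n - 1)))) :
    ∀ n : ℕ, 1 ≤ n →
      L n = (nψ n / (n : K)) •
        ∑ k ∈ Finset.Icc 1 n,
          ((-1 : K) ^ k * (n.choose k : K) *
            (∏ i ∈ Finset.range (n - k), nψ (n - 1 - i)) *
            ((k : K) / nψ k)) • X ^ k := by
  have negpow : ∀ (c : ℕ) (p : Polynomial K),
      ((-1 : Module.End K (Polynomial K)) ^ c) p = ((-1 : K) ^ c) • p := by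
    intro c p
    induction c with
    | zero => simp
    | succ c ih =>
      rw [pow_succ, Module.End.mul_apply, LinearMap.neg_apply, Module.End.one_apply, map_neg, ih,
        pow_succ]
      simp [smul_smul]
  have hpowD : ∀ m j : ℕ, j ≤ m → (D ^ j) ((X : Polynomial K) ^ m)
      = (∏ i ∈ Finset.range j, nψ (m - i)) • X ^ (m - j) := by
    intro m j
    induction j with
    | zero => intro _; simp
    | succ j ih =>
      intro h
      rw [pow_succ', Module.End.mul_apply, ih (by omega), map_smul]
      have h1 : m - j = (m - j - 1) + 1 := by omega
      rw [h1, hD, smul_smul, Finset.prod_range_succ]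
      have h2 : m - j - 1 + 1 = m - j := by omega
      have h3 : m - j - 1 = m - (j + 1) := by omega
      rw [h2, h3]
  have hterm : ∀ (j c b : ℕ) (p : Polynomial K),
      (D ^ j * (-1) ^ c * (b : Module.End K (Polynomial K))) p
        = ((-1 : K) ^ c * b) • (D ^ j) p := by
    intro j c b p
    rw [Module.End.mul_apply, Module.End.mul_apply, Module.End.natCast_apply, negpow,
      map_smul, map_nsmul, ← Nat.cast_smul_eq_nsmul K, smul_smul]
  intro n hn
  obtain ⟨m, rfl⟩ : ∃ m, n = m + 1 := ⟨n - 1, by omega⟩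
  rw [hL _ hn]
  congr 1
  have hid : (D - LinearMap.id : Module.End K (Polynomial K)) = D + (-1) := by
    ext p; simp [sub_eq_add_neg]
  have hzero : (D ^ (m + 1)) ((X : Polynomial K) ^ m) = 0 := by
    rw [pow_succ', Module.End.mul_apply, hpowD m m le_rfl, map_smul]
    simp [hD1]
  have key : ((D - LinearMap.id : Module.End K (Polynomial K)) ^ (m + 1))
      ((X : Polynomial K) ^ ((m + 1) - 1))
      = ∑ j ∈ Finset.range (m + 1),
          (((-1 : K) ^ (m + 1 - j) * ((m + 1).choose j))
            * (∏ i ∈ Finset.range j, nψ (m - i))) • X ^ (m - j) := by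
    rw [hid, (Commute.neg_one_right D).add_pow, LinearMap.sum_apply]
    simp only [Nat.add_sub_cancel]
    rw [Finset.sum_range_succ]
    simp only [hterm]
    rw [hzero, smul_zero, add_zero]
    refine Finset.sum_congr rfl fun j hj => ?_
    rw [Finset.mem_range] at hj
    rw [hpowD m j (by omega), smul_smul]
  rw [key, map_sum]
  simp only [map_smul, hXop]
  refine Finset.sum_nbij' (fun j => m + 1 - j) (fun k => m + 1 - k) ?_ ?_ ?_ ?_ ?_
  · intro j hj; simp only [Finset.mem_range] at hj; simp only [Finset.mem_Icc]; omega
  · intro k hk; simp only [Finset.mem_Icc] at hk; simp only [Finset.mem_range]; omega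
  · intro j hj; simp only [Finset.mem_range] at hj; omega
  · intro k hk; simp only [Finset.mem_Icc] at hk; omega
  · intro j hj
    simp only [Finset.mem_range] at hj
    rw [smul_smul]
    have e1 : m - j + 1 = m + 1 - j := by omega
    have e2 : (m + 1).choose (m + 1 - j) = (m + 1).choose j := Nat.choose_symm (by omega)
    have e3 : m + 1 - (m + 1 - j) = j := by omega
    rw [e1, e2, e3]
    simp only [Nat.add_sub_cancel]
    congr 1
    rw [← e1]
    push_cast
    ring
end
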